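/- arXiv:2101.11657 — 9 statements merged into one kernel-verified Lean document; each statement's English description precedes it below -/
import Mathlib

section
/- Let P be an N×N row-stochastic matrix (N ≥ 2) such that the pivot denominator S := ∑_{k=1}^{N−1} p_{N,k} is positive. Then the (N−1)×(N−1) matrix P⁽ᴺ⁻¹⁾ obtained by one GTH elimination step, p⁽ᴺ⁻¹⁾_{i,j} = p_{i,j} + p_{i,N} p_{N,j} / S for 1 ≤ i, j ≤ N−1, has nonnegative entries and each of its rows sums to 1; that is, P⁽ᴺ⁻¹⁾ is row-stochastic. -/
/-- A square real matrix is row-stochastic if all entries are nonnegative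
and each row sums to 1. -/
def RowStochastic {ι : Type*} [Fintype ι] (P : Matrix ι ι ℝ) : Prop :=
  (∀ i j, 0 ≤ P i j) ∧ ∀ i, ∑ j, P i j = 1

/-- One GTH elimination step: eliminate the last state of an `(n+1) × (n+1)` matrix,
producing an `n × n` matrix with entries
`p_{i,j} + p_{i,N} p_{N,j} / (∑_{k=1}^{N-1} p_{N,k})`. -/
noncomputable def gthStep {n : ℕ} (P : Matrix (Fin (n + 1)) (Fin (n + 1)) ℝ) :
    Matrix (Fin n) (Fin n) ℝ :=
  fun i j =>
    P i.castSucc j.castSucc +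
      P i.castSucc (Fin.last n) * P (Fin.last n) j.castSucc /
        ∑ k : Fin n, P (Fin.last n) k.castSucc

section GTHStep

variable {n : ℕ} {P : Matrix (Fin (n + 1)) (Fin (n + 1)) ℝ}

theorem gthStep_nonneg (hP : ∀ i j, 0 ≤ P i j) (i j : Fin n) : 0 ≤ gthStep P i j :=
  add_nonneg (hP _ _) <| div_nonneg (mul_nonneg (hP _ _) (hP _ _)) <|
    Finset.sum_nonneg fun _ _ => hP _ _

/- The weight `P i N` that row `i` sends to the eliminated state `N` is redistributed along
row `N`, renormalised over the surviving states, so the total weight of the row is unchanged. -/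
theorem sum_gthStep_row (hS : ∑ k : Fin n, P (Fin.last n) k.castSucc ≠ 0) (i : Fin n) :
    ∑ j, gthStep P i j = ∑ j, P i.castSucc j := by
  simp only [gthStep, Finset.sum_add_distrib, ← Finset.sum_div, ← Finset.mul_sum, mul_div_assoc,
    div_self hS, mul_one, Fin.sum_univ_castSucc]

end GTHStep

theorem gthStep_rowStochastic_general {n : ℕ}
    (P : Matrix (Fin (n + 1)) (Fin (n + 1)) ℝ) (hP : RowStochastic P)
    (hS : 0 < ∑ k : Fin n, P (Fin.last n) k.castSucc) :
    RowStochastic (gthStep P) :=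
  ⟨gthStep_nonneg hP.1, fun i => (sum_gthStep_row hS.ne' i).trans (hP.2 i.castSucc)⟩

/-- One GTH elimination step applied to a row-stochastic matrix with positive pivot
denominator gives again a row-stochastic matrix. -/
theorem gthStep_rowStochastic {n : ℕ} (hn : 1 ≤ n)
    (P : Matrix (Fin (n + 1)) (Fin (n + 1)) ℝ) (hP : RowStochastic P)
    (hS : 0 < ∑ k : Fin n, P (Fin.last n) k.castSucc) :
    RowStochastic (gthStep P) :=
  gthStep_rowStochastic_general P hP hS
end

section
/- Let P be an N×N row-stochastic matrix (N ≥ 2) with ∑_{k=1}^{N−1} p_{N,k} > 0, and let π = (π_1, …, π_N) satisfy the stationary equations π_j = ∑_{i=1}^{N} π_i p_{i,j} for all j. Then the restricted vector (π_1, …, π_{N−1}) satisfies the eliminated system: π_j = ∑_{i=1}^{N−1} π_i p⁽ᴺ⁻¹⁾_{i,j} for all 1 ≤ j ≤ N−1, where p⁽ᴺ⁻¹⁾_{i,j} = p_{i,j} + p_{i,N} p_{N,j} / (∑_{k=1}^{N−1} p_{N,k}). -/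
/-!
Since the last row sums to `1`, stationarity at the last state `N` reads
`π_N * S = ∑_{i<N} π_i p_{i,N}` with `S = ∑_{k<N} p_{N,k}`. Substituting this for the term
`π_N p_{N,j}` in stationarity at `j < N` gives exactly the eliminated equation.
-/

open Finset

namespace Matrix

variable {n : ℕ} (P : Matrix (Fin (n + 1)) (Fin (n + 1)) ℝ)

theorem sum_mul_gthStep (x : Fin n → ℝ) (j : Fin n) :
    ∑ i, x i * gthStep P i j =
      ∑ i, x i * P i.castSucc j.castSucc +
        (∑ i, x i * P i.castSucc (Fin.last n)) * P (Fin.last n) j.castSucc /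
          ∑ k : Fin n, P (Fin.last n) k.castSucc := by
  rw [sum_mul, sum_div, ← sum_add_distrib]
  exact sum_congr rfl fun i _ => by simp only [gthStep]; ring

theorem stationary_last_mul_sum_eq (hrow : ∑ j, P (Fin.last n) j = 1) {π : Fin (n + 1) → ℝ}
    (hπ : π (Fin.last n) = ∑ i, π i * P i (Fin.last n)) :
    π (Fin.last n) * ∑ k : Fin n, P (Fin.last n) k.castSucc =
      ∑ i : Fin n, π i.castSucc * P i.castSucc (Fin.last n) := by
  rw [Fin.sum_univ_castSucc] at hrow hπ
  linear_combination π (Fin.last n) * hrow + hπ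

end Matrix

theorem gthStep_stationary_general {n : ℕ}
    (P : Matrix (Fin (n + 1)) (Fin (n + 1)) ℝ) (hP : RowStochastic P)
    (hS : 0 < ∑ k : Fin n, P (Fin.last n) k.castSucc)
    (π : Fin (n + 1) → ℝ) (hπ : ∀ j, π j = ∑ i, π i * P i j) :
    ∀ j : Fin n, π j.castSucc = ∑ i : Fin n, π i.castSucc * gthStep P i j := by
  intro j
  rw [P.sum_mul_gthStep, ← P.stationary_last_mul_sum_eq (hP.2 _) (hπ _), hπ j.castSucc,
    Fin.sum_univ_castSucc, mul_right_comm, mul_div_cancel_right₀ _ hS.ne']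

/-- If `π` solves the stationary equations of `P`, then its restriction to the first
`N - 1` states solves the eliminated (GTH) system. -/
theorem gthStep_stationary {n : ℕ} (hn : 1 ≤ n)
    (P : Matrix (Fin (n + 1)) (Fin (n + 1)) ℝ) (hP : RowStochastic P)
    (hS : 0 < ∑ k : Fin n, P (Fin.last n) k.castSucc)
    (π : Fin (n + 1) → ℝ) (hπ : ∀ j, π j = ∑ i, π i * P i j) :
    ∀ j : Fin n, π j.castSucc = ∑ i : Fin n, π i.castSucc * gthStep P i j :=
  gthStep_stationary_general P hP hS π hπ
end

section
/- Let P be an N×N row-stochastic irreducible matrix and let E ⊆ Fin N be nonempty with nonempty complement, with blocks T, U, D, Q of P with respect to E and Eᶜ. Then I − Q is invertible, every entry of (I − Q)⁻¹ is nonnegative, and the finite censored matrix P^E := T + U (I − Q)⁻¹ D is row-stochastic (nonnegative entries, each row summing to 1). -/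
/-- A square matrix is irreducible if for all states `i, j` some power of the matrix
has a positive `(i, j)` entry. -/
def MatIrreducible {ι : Type*} [Fintype ι] [DecidableEq ι] (P : Matrix ι ι ℝ) : Prop :=
  ∀ i j, ∃ k : ℕ, 0 < (P ^ k) i j

/-! Let `Q` be the block of `P` on `Eᶜ`. Its row sums are at most `1`, and by irreducibility every
state of `Eᶜ` reaches `E`, so each row of some power `Q ^ k` sums to less than `1`. The row sums of
`Q ^ k` decrease with `k`, hence a single power `R = Q ^ m` has ℓ∞-operator norm `< 1`, and
`(1 - Q) * (∑_{k < m} Q ^ k) * (∑ₙ R ^ n) = 1` exhibits a nonnegative inverse of `1 - Q`.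
Finally the row sums of `P` give `D 1 = (1 - Q) 1`, so `(T + U (1 - Q)⁻¹ D) 1 = T 1 + U 1 = 1`. -/

open Matrix Finset

section

variable {ι : Type*} [Fintype ι] [DecidableEq ι] {P : Matrix ι ι ℝ}

lemma rowStochastic_iff_mem_rowStochastic : RowStochastic P ↔ P ∈ rowStochastic ℝ ι :=
  mem_rowStochastic_iff_sum.symm

lemma rowStochastic_iff_mulVec_one :
    RowStochastic P ↔ (∀ i j, 0 ≤ P i j) ∧ P *ᵥ 1 = 1 :=
  rowStochastic_iff_mem_rowStochastic.trans mem_rowStochastic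

lemma RowStochastic.pow (hP : RowStochastic P) (k : ℕ) : RowStochastic (P ^ k) :=
  rowStochastic_iff_mem_rowStochastic.2 (pow_mem (rowStochastic_iff_mem_rowStochastic.1 hP) k)

end

namespace Matrix

variable {l m n ι α : Type*} [Fintype ι] [DecidableEq ι]

lemma mulVec_one_apply [Fintype n] [NonAssocSemiring α] (A : Matrix m n α) (i : m) :
    (A *ᵥ 1) i = ∑ j, A i j := by
  simp [mulVec, dotProduct]

lemma mul_apply_nonneg [Fintype m] {A : Matrix l m ℝ} {B : Matrix m n ℝ}
    (hA : ∀ i j, 0 ≤ A i j) (hB : ∀ i j, 0 ≤ B i j) (i : l) (j : n) : 0 ≤ (A * B) i j :=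
  sum_nonneg fun k _ => mul_nonneg (hA i k) (hB k j)

lemma mulVec_mono_of_nonneg [Fintype n] {A : Matrix m n ℝ} (hA : ∀ i j, 0 ≤ A i j)
    {v w : n → ℝ} (hvw : v ≤ w) : A *ᵥ v ≤ A *ᵥ w :=
  fun i => sum_le_sum fun j _ => mul_le_mul_of_nonneg_left (hvw j) (hA i j)

lemma toBlock_mulVec_one_add_toBlock_compl [Fintype n] [NonAssocSemiring α] (A : Matrix m n α)
    (q : m → Prop) (p : n → Prop) [DecidablePred p] :
    A.toBlock q p *ᵥ 1 + A.toBlock q (fun j => ¬p j) *ᵥ 1 = (A *ᵥ 1) ∘ Subtype.val := by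
  ext i
  simpa [mulVec_one_apply, toBlock_apply] using Fintype.sum_subtype_add_sum_subtype p (A i)

noncomputable def censor [CommRing α] (P : Matrix ι ι α) (p : ι → Prop) [DecidablePred p] :
    Matrix {a // p a} {a // p a} α :=
  P.toBlock p p + P.toBlock p (fun j => ¬p j) *
    (1 - P.toBlock (fun j => ¬p j) (fun j => ¬p j))⁻¹ * P.toBlock (fun j => ¬p j) p

lemma toBlock_pow_apply_le {A : Matrix ι ι ℝ} (hA : ∀ i j, 0 ≤ A i j) (p : ι → Prop)
    [DecidablePred p] (k : ℕ) (i j : {a // p a}) : (A.toBlock p p ^ k) i j ≤ (A ^ k) i j := by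
  induction k generalizing j with
  | zero => simp [one_apply, Subtype.ext_iff]
  | succ k ih =>
    have hrest : 0 ≤ ∑ l : {a // ¬p a}, (A ^ k) i l * A l j :=
      sum_nonneg fun l _ => mul_nonneg (pow_apply_nonneg hA k i l) (hA l j)
    calc (A.toBlock p p ^ (k + 1)) i j = ∑ l : {a // p a}, (A.toBlock p p ^ k) i l * A l j := by
          rw [pow_succ, mul_apply]; rfl
      _ ≤ ∑ l : {a // p a}, (A ^ k) i l * A l j :=
          sum_le_sum fun l _ => mul_le_mul_of_nonneg_right (ih l) (hA l j)
      _ ≤ ∑ l, (A ^ k) i l * A l j := by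
          rw [← Fintype.sum_subtype_add_sum_subtype p]; exact le_add_of_nonneg_right hrest
      _ = (A ^ (k + 1)) i j := by rw [pow_succ, mul_apply]

lemma pow_mulVec_one_antitone {Q : Matrix ι ι ℝ} (hQ : ∀ i j, 0 ≤ Q i j) (hQ1 : Q *ᵥ 1 ≤ 1) :
    Antitone fun k : ℕ => Q ^ k *ᵥ 1 :=
  antitone_nat_of_succ_le fun k => by
    simpa only [pow_succ, ← mulVec_mulVec] using mulVec_mono_of_nonneg (pow_apply_nonneg hQ k) hQ1

lemma exists_pow_mulVec_one_lt {Q : Matrix ι ι ℝ} (hQ : ∀ i j, 0 ≤ Q i j) (hQ1 : Q *ᵥ 1 ≤ 1)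
    (h : ∀ i, ∃ k, (Q ^ k *ᵥ 1) i < 1) : ∃ m, ∀ i, (Q ^ m *ᵥ 1) i < 1 := by
  choose k hk using h
  exact ⟨univ.sup k, fun i =>
    (pow_mulVec_one_antitone hQ hQ1 (le_sup (mem_univ i)) i).trans_lt (hk i)⟩

section LinftyOpNorm

attribute [local instance] Matrix.linftyOpNormedAddCommGroup

lemma linfty_opNorm_lt_one_of_nonneg [Fintype m] [Fintype n] {A : Matrix m n ℝ}
    (hA : ∀ i j, 0 ≤ A i j) (hlt : ∀ i, (A *ᵥ 1) i < 1) : ‖A‖ < 1 := by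
  rw [linfty_opNorm_def, NNReal.coe_lt_one, Finset.sup_lt_iff zero_lt_one]
  intro i _
  rw [← NNReal.coe_lt_one, NNReal.coe_sum]
  simpa [Real.norm_of_nonneg (hA i _), mulVec_one_apply] using hlt i

end LinftyOpNorm

lemma summable_pow_of_nonneg_of_mulVec_one_lt {R : Matrix ι ι ℝ} (hR : ∀ i j, 0 ≤ R i j)
    (hlt : ∀ i, (R *ᵥ 1) i < 1) : Summable (R ^ ·) := by
  let := Matrix.linftyOpNormedRing (n := ι) (α := ℝ)
  let := Matrix.linftyOpNormedAlgebra (n := ι) (R := ℝ) (α := ℝ)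
  have : CompleteSpace (Matrix ι ι ℝ) := FiniteDimensional.complete ℝ _
  exact summable_geometric_of_norm_lt_one (linfty_opNorm_lt_one_of_nonneg hR hlt)

lemma exists_nonneg_right_inv_one_sub {Q : Matrix ι ι ℝ} (hQ : ∀ i j, 0 ≤ Q i j) {m : ℕ}
    (hm : ∀ i, (Q ^ m *ᵥ 1) i < 1) : ∃ X, (1 - Q) * X = 1 ∧ ∀ i j, 0 ≤ X i j := by
  have hsum := summable_pow_of_nonneg_of_mulVec_one_lt (pow_apply_nonneg hQ m) hm
  refine ⟨(∑ k ∈ range m, Q ^ k) * ∑' n, (Q ^ m) ^ n, ?_, mul_apply_nonneg ?_ ?_⟩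
  · rw [← mul_assoc, mul_neg_geom_sum, hsum.one_sub_mul_tsum_pow]
  · intro i j
    rw [sum_apply]
    exact sum_nonneg fun k _ => pow_apply_nonneg hQ k i j
  · intro i j
    refine (Pi.hasSum.1 (Pi.hasSum.1 hsum.hasSum i) j).nonneg fun n => ?_
    rw [← pow_mul]
    exact pow_apply_nonneg hQ _ i j

theorem isUnit_one_sub_and_inv_nonneg {Q : Matrix ι ι ℝ} (hQ : ∀ i j, 0 ≤ Q i j)
    (hQ1 : Q *ᵥ 1 ≤ 1) (h : ∀ i, ∃ k, (Q ^ k *ᵥ 1) i < 1) :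
    IsUnit (1 - Q) ∧ ∀ i j, 0 ≤ (1 - Q)⁻¹ i j := by
  obtain ⟨m, hm⟩ := exists_pow_mulVec_one_lt hQ hQ1 h
  obtain ⟨X, hX, hXnn⟩ := exists_nonneg_right_inv_one_sub hQ hm
  exact ⟨IsUnit.of_mul_eq_one X hX, by rwa [inv_eq_right_inv hX]⟩

end Matrix

namespace RowStochastic

variable {ι : Type*} [Fintype ι] [DecidableEq ι] {P : Matrix ι ι ℝ}

lemma toBlock_mulVec_one_add_toBlock_compl (hP : RowStochastic P) (q p : ι → Prop)
    [DecidablePred p] : P.toBlock q p *ᵥ 1 + P.toBlock q (fun j => ¬p j) *ᵥ 1 = 1 := by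
  rw [Matrix.toBlock_mulVec_one_add_toBlock_compl, (rowStochastic_iff_mulVec_one.1 hP).2]
  rfl

lemma toBlock_mulVec_one_le (hP : RowStochastic P) (q p : ι → Prop) [DecidablePred p] :
    P.toBlock q p *ᵥ 1 ≤ 1 := fun i =>
  calc (P.toBlock q p *ᵥ 1) i
      ≤ (P.toBlock q p *ᵥ 1) i + (P.toBlock q (fun j => ¬p j) *ᵥ 1) i :=
        le_add_of_nonneg_right <| by
          rw [mulVec_one_apply]; exact sum_nonneg fun j _ => hP.1 _ _
    _ = 1 := congrFun (hP.toBlock_mulVec_one_add_toBlock_compl q p) i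

lemma exists_pow_toBlock_compl_mulVec_one_lt (hP : RowStochastic P) (hirr : MatIrreducible P)
    {p : ι → Prop} [DecidablePred p] (hp : ∃ e, p e) (i : {a // ¬p a}) :
    ∃ k, (P.toBlock (fun j => ¬p j) (fun j => ¬p j) ^ k *ᵥ 1) i < 1 := by
  obtain ⟨e, he⟩ := hp
  obtain ⟨k, hk⟩ := hirr i e
  refine ⟨k, ?_⟩
  have hsplit := congrFun ((hP.pow k).toBlock_mulVec_one_add_toBlock_compl (fun j => ¬p j) p) i
  have hle : (P.toBlock (fun j => ¬p j) (fun j => ¬p j) ^ k *ᵥ 1) i ≤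
      ((P ^ k).toBlock (fun j => ¬p j) (fun j => ¬p j) *ᵥ 1) i := by
    simp only [mulVec_one_apply]
    exact sum_le_sum fun j _ => toBlock_pow_apply_le hP.1 _ k i j
  have hpos : 0 < ((P ^ k).toBlock (fun j => ¬p j) p *ᵥ 1) i := by
    rw [mulVec_one_apply]
    exact hk.trans_le <| single_le_sum (f := fun j : {a // p a} => (P ^ k) i j)
      (fun j _ => pow_apply_nonneg hP.1 k i j) (mem_univ ⟨e, he⟩)
  simp only [Pi.add_apply, Pi.one_apply] at hsplit
  linarith

theorem censor (hP : RowStochastic P) (p : ι → Prop) [DecidablePred p]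
    (hQ : IsUnit (1 - P.toBlock (fun j => ¬p j) (fun j => ¬p j)))
    (hinv : ∀ i j, 0 ≤ (1 - P.toBlock (fun j => ¬p j) (fun j => ¬p j))⁻¹ i j) :
    RowStochastic (P.censor p) := by
  set Q := P.toBlock (fun j => ¬p j) (fun j => ¬p j)
  have hnn (q r : ι → Prop) : ∀ i j, 0 ≤ P.toBlock q r i j := fun i j => hP.1 i j
  have hD : P.toBlock (fun j => ¬p j) p *ᵥ 1 = (1 - Q) *ᵥ 1 := by
    rw [sub_mulVec, one_mulVec]
    exact eq_sub_of_add_eq (hP.toBlock_mulVec_one_add_toBlock_compl _ p)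
  refine rowStochastic_iff_mulVec_one.2 ⟨fun i j => add_nonneg (hP.1 _ _)
    (mul_apply_nonneg (mul_apply_nonneg (hnn _ _) hinv) (hnn _ _) i j), ?_⟩
  rw [Matrix.censor, add_mulVec, ← mulVec_mulVec, ← mulVec_mulVec, hD, mulVec_mulVec _ (1 - Q)⁻¹,
    nonsing_inv_mul _ ((isUnit_iff_isUnit_det _).1 hQ), one_mulVec,
    hP.toBlock_mulVec_one_add_toBlock_compl]

end RowStochastic

theorem censored_matrix_rowStochastic_general {N : ℕ}
    (P : Matrix (Fin N) (Fin N) ℝ) (hP : RowStochastic P) (hirr : MatIrreducible P)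
    (E : Finset (Fin N)) (hE : E.Nonempty) :
    IsUnit (1 - P.toBlock (· ∉ E) (· ∉ E)) ∧
      (∀ i j, 0 ≤ (1 - P.toBlock (· ∉ E) (· ∉ E))⁻¹ i j) ∧
      RowStochastic
        (P.toBlock (· ∈ E) (· ∈ E) +
          P.toBlock (· ∈ E) (· ∉ E) * (1 - P.toBlock (· ∉ E) (· ∉ E))⁻¹ *
            P.toBlock (· ∉ E) (· ∈ E)) := by
  obtain ⟨hunit, hinv⟩ := isUnit_one_sub_and_inv_nonneg (Q := P.toBlock (· ∉ E) (· ∉ E))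
    (fun i j => hP.1 i j) (hP.toBlock_mulVec_one_le _ _)
    (hP.exists_pow_toBlock_compl_mulVec_one_lt hirr hE)
  refine ⟨hunit, hinv, ?_⟩
  -- the statement carries `Finset.Subtype.fintype E` rather than `Subtype.fintype (· ∈ E)`
  convert hP.censor (· ∈ E) hunit hinv using 2
  rfl

/-- For an irreducible row-stochastic matrix `P` and a nonempty censoring set `E` with
nonempty complement, with blocks `T = P.toBlock (· ∈ E) (· ∈ E)`,
`U = P.toBlock (· ∈ E) (· ∉ E)`, `D = P.toBlock (· ∉ E) (· ∈ E)` and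
`Q = P.toBlock (· ∉ E) (· ∉ E)`, the matrix `I - Q` is invertible, its inverse has
nonnegative entries, and the censored matrix `T + U (I - Q)⁻¹ D` is row-stochastic. -/
theorem censored_matrix_rowStochastic {N : ℕ}
    (P : Matrix (Fin N) (Fin N) ℝ) (hP : RowStochastic P) (hirr : MatIrreducible P)
    (E : Finset (Fin N)) (hE : E.Nonempty) (hEc : Eᶜ.Nonempty) :
    IsUnit (1 - P.toBlock (· ∉ E) (· ∉ E)) ∧
      (∀ i j, 0 ≤ (1 - P.toBlock (· ∉ E) (· ∉ E))⁻¹ i j) ∧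
      RowStochastic
        (P.toBlock (· ∈ E) (· ∈ E) +
          P.toBlock (· ∈ E) (· ∉ E) * (1 - P.toBlock (· ∉ E) (· ∉ E))⁻¹ *
            P.toBlock (· ∉ E) (· ∈ E)) :=
  censored_matrix_rowStochastic_general P hP hirr E hE
end

section
/- (RG-factorization of the GTH algorithm.) Let P be an N×N row-stochastic irreducible matrix whose GTH recursion matrices P⁽ⁿ⁾ are well defined (each denominator S_n := ∑_{k=1}^{n−1} p⁽ⁿ⁾_{n,k} positive for 2 ≤ n ≤ N). Define the strictly upper triangular matrix R_U by (R_U)_{i,n} = p⁽ⁿ⁾_{i,n} / S_n for i < n, the strictly lower triangular matrix G_L by (G_L)_{n,j} = p⁽ⁿ⁾_{n,j} / S_n for j < n, and the diagonal matrix Ψ_D = diag(ψ_1, …, ψ_N) with ψ_n = p⁽ⁿ⁾_{n,n}. Then I − P = (I − R_U)(I − Ψ_D)(I − G_L). -/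
/-- The GTH (censoring) recursion: `gthFam P N = P` and
`gthFam P (n-1) = gthStep (gthFam P n)`, i.e. the matrices `P⁽ⁿ⁾` of the GTH algorithm
(state `m + 1` of the paper corresponds to index `m : Fin n`). -/
noncomputable def gthFam : {N : ℕ} → Matrix (Fin N) (Fin N) ℝ → (n : ℕ) →
    Matrix (Fin n) (Fin n) ℝ
  | 0, _, _ => 0
  | M + 1, P, n =>
    if h : n = M + 1 then (by subst h; exact P) else gthFam (gthStep P) n

/-- The GTH pivot denominator `S_{m+1} = ∑_{k=1}^{m} p⁽ᵐ⁺¹⁾_{m+1,k}` for state `m + 1`. -/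
noncomputable def gthS {N : ℕ} (P : Matrix (Fin N) (Fin N) ℝ) (m : ℕ) : ℝ :=
  ∑ k : Fin m, gthFam P (m + 1) (Fin.last m) k.castSucc

/-- The strictly upper triangular matrix `R_U` of the RG-factorization:
`(R_U)_{i,n} = p⁽ⁿ⁾_{i,n} / S_n` for `i < n`. -/
noncomputable def gthRU {N : ℕ} (P : Matrix (Fin N) (Fin N) ℝ) :
    Matrix (Fin N) (Fin N) ℝ :=
  fun i j =>
    if h : (i : ℕ) < (j : ℕ) then
      gthFam P ((j : ℕ) + 1) ⟨(i : ℕ), Nat.lt_succ_of_lt h⟩ (Fin.last (j : ℕ)) /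
        gthS P (j : ℕ)
    else 0

/-- The strictly lower triangular matrix `G_L` of the RG-factorization:
`(G_L)_{n,j} = p⁽ⁿ⁾_{n,j} / S_n` for `j < n`. -/
noncomputable def gthGL {N : ℕ} (P : Matrix (Fin N) (Fin N) ℝ) :
    Matrix (Fin N) (Fin N) ℝ :=
  fun i j =>
    if h : (j : ℕ) < (i : ℕ) then
      gthFam P ((i : ℕ) + 1) (Fin.last (i : ℕ)) ⟨(j : ℕ), Nat.lt_succ_of_lt h⟩ /
        gthS P (i : ℕ)
    else 0

/-- The diagonal matrix `Ψ_D = diag(ψ_1, …, ψ_N)` with `ψ_n = p⁽ⁿ⁾_{n,n}`. -/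
noncomputable def gthPsi {N : ℕ} (P : Matrix (Fin N) (Fin N) ℝ) :
    Matrix (Fin N) (Fin N) ℝ :=
  Matrix.diagonal fun n => gthFam P ((n : ℕ) + 1) (Fin.last (n : ℕ)) (Fin.last (n : ℕ))

open Matrix

theorem Matrix.mul_diagonal_mul_apply {l m n α : Type*} [Fintype m] [DecidableEq m]
    [NonUnitalNonAssocSemiring α] (A : Matrix l m α) (B : Matrix m n α) (d : m → α)
    (i : l) (j : n) :
    (A * diagonal d * B) i j = ∑ k, A i k * d k * B k j := by
  simp only [mul_apply, diagonal_apply, mul_ite, mul_zero, Finset.sum_ite_eq', Finset.mem_univ,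
    if_true]

section

variable {N : ℕ} (P : Matrix (Fin N) (Fin N) ℝ)

theorem gthRU_of_le {i j : Fin N} (h : j ≤ i) : gthRU P i j = 0 :=
  dif_neg (not_lt.2 h)

theorem gthGL_of_le {i j : Fin N} (h : i ≤ j) : gthGL P i j = 0 :=
  dif_neg (not_lt.2 h)

theorem one_sub_gthPsi : 1 - gthPsi P = diagonal fun k => 1 - gthPsi P k k := by
  rw [gthPsi, ← diagonal_one, diagonal_sub]
  simp

end

section Recursion

variable {M : ℕ} (P : Matrix (Fin (M + 1)) (Fin (M + 1)) ℝ)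

theorem gthFam_self : gthFam P (M + 1) = P := by
  simp [gthFam]

theorem gthFam_of_ne {n : ℕ} (h : n ≠ M + 1) : gthFam P n = gthFam (gthStep P) n := by
  rw [gthFam, dif_neg h]

theorem gthS_self : gthS P M = ∑ k : Fin M, P (Fin.last M) k.castSucc := by
  rw [gthS, gthFam_self]

theorem gthS_of_lt {m : ℕ} (h : m < M) : gthS P m = gthS (gthStep P) m := by
  rw [gthS, gthS, gthFam_of_ne P (by omega)]

theorem gthRU_castSucc (i j : Fin M) :
    gthRU P i.castSucc j.castSucc = gthRU (gthStep P) i j := by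
  simp only [gthRU, Fin.val_castSucc]
  split_ifs
  · rw [gthFam_of_ne P (by omega), gthS_of_lt P j.isLt]
  · rfl

theorem gthRU_castSucc_last (i : Fin M) :
    gthRU P i.castSucc (Fin.last M) = P i.castSucc (Fin.last M) / gthS P M := by
  rw [gthRU, dif_pos (show (i.castSucc : ℕ) < (Fin.last M : ℕ) from i.isLt)]
  change gthFam P (M + 1) _ _ / gthS P M = _
  rw [gthFam_self]
  rfl

theorem gthGL_castSucc (i j : Fin M) :
    gthGL P i.castSucc j.castSucc = gthGL (gthStep P) i j := by
  simp only [gthGL, Fin.val_castSucc]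
  split_ifs
  · rw [gthFam_of_ne P (by omega), gthS_of_lt P i.isLt]
  · rfl

theorem gthGL_last_castSucc (j : Fin M) :
    gthGL P (Fin.last M) j.castSucc = P (Fin.last M) j.castSucc / gthS P M := by
  rw [gthGL, dif_pos (show (j.castSucc : ℕ) < (Fin.last M : ℕ) from j.isLt)]
  change gthFam P (M + 1) _ _ / gthS P M = _
  rw [gthFam_self]
  rfl

theorem gthPsi_castSucc (i j : Fin M) :
    gthPsi P i.castSucc j.castSucc = gthPsi (gthStep P) i j := by
  simp only [gthPsi, diagonal_apply, Fin.castSucc_inj, Fin.val_castSucc]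
  split_ifs
  · rw [gthFam_of_ne P (by omega)]
  · rfl

theorem gthPsi_last : gthPsi P (Fin.last M) (Fin.last M) = P (Fin.last M) (Fin.last M) := by
  simp only [gthPsi, diagonal_apply_eq, Fin.val_last, gthFam_self]

theorem gthRU_last_apply (j : Fin (M + 1)) : gthRU P (Fin.last M) j = 0 :=
  gthRU_of_le P (Fin.le_last j)

theorem gthGL_apply_last (i : Fin (M + 1)) : gthGL P i (Fin.last M) = 0 :=
  gthGL_of_le P (Fin.le_last i)

end Recursion

theorem gthStep_rowSum {M : ℕ} {P : Matrix (Fin (M + 1)) (Fin (M + 1)) ℝ}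
    (hrow : ∀ i, ∑ j, P i j = 1) (hS : gthS P M ≠ 0) (i : Fin M) :
    ∑ j, gthStep P i j = 1 := by
  rw [gthS_self] at hS
  have hi := hrow i.castSucc
  rw [Fin.sum_univ_castSucc] at hi
  simp only [gthStep, Finset.sum_add_distrib, ← Finset.sum_div, ← Finset.mul_sum,
    mul_div_assoc, div_self hS]
  linarith

theorem one_sub_eq_gth_factor_of_gthStep {M : ℕ} {P : Matrix (Fin (M + 1)) (Fin (M + 1)) ℝ}
    (hrow : ∀ i, ∑ j, P i j = 1) (hS : gthS P M ≠ 0)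
    (ih : 1 - gthStep P =
      (1 - gthRU (gthStep P)) * (1 - gthPsi (gthStep P)) * (1 - gthGL (gthStep P))) :
    1 - P = (1 - gthRU P) * (1 - gthPsi P) * (1 - gthGL P) := by
  have hs : 1 - P (Fin.last M) (Fin.last M) = gthS P M := by
    have h := hrow (Fin.last M)
    rw [Fin.sum_univ_castSucc, ← gthS_self] at h
    linarith
  have hne (k : Fin M) : Fin.last M ≠ k.castSucc := (Fin.castSucc_ne_last k).symm
  ext i j
  rw [one_sub_gthPsi, mul_diagonal_mul_apply, Fin.sum_univ_castSucc]
  induction i using Fin.lastCases with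
  | last =>
    induction j using Fin.lastCases with
    | last => simp [gthRU_last_apply, gthGL_apply_last, gthPsi_last, hs, one_apply, hne]
    | cast j =>
      simp [gthRU_last_apply, gthGL_last_castSucc, gthPsi_last, hs, one_apply, hne,
        mul_div_cancel₀ _ hS]
  | cast i =>
    induction j using Fin.lastCases with
    | last => simp [gthRU_castSucc_last, gthGL_apply_last, gthPsi_last, hs, one_apply, hS]
    | cast j =>
      have hsum : ∑ k : Fin M, (1 - gthRU P) i.castSucc k.castSucc *
          (1 - gthPsi P k.castSucc k.castSucc) * (1 - gthGL P) k.castSucc j.castSucc =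
          (1 - gthStep P) i j := by
        rw [ih, one_sub_gthPsi, mul_diagonal_mul_apply]
        simp only [Matrix.sub_apply, one_apply, Fin.castSucc_inj, gthRU_castSucc, gthPsi_castSucc,
          gthGL_castSucc]
      rw [hsum]
      simp only [Matrix.sub_apply, one_apply, Fin.castSucc_inj, Fin.castSucc_ne_last, hne,
        if_false, gthStep, ← gthS_self, gthRU_castSucc_last, gthGL_last_castSucc, gthPsi_last, hs]
      field_simp
      ring

theorem one_sub_eq_gth_factor_of_fin_one (P : Matrix (Fin 1) (Fin 1) ℝ) :
    1 - P = (1 - gthRU P) * (1 - gthPsi P) * (1 - gthGL P) := by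
  have hR : gthRU P = 0 := by
    ext i j
    exact gthRU_of_le P (Subsingleton.elim j i).le
  have hG : gthGL P = 0 := by
    ext i j
    exact gthGL_of_le P (Subsingleton.elim i j).le
  have hΨ : gthPsi P = P := by
    ext i j
    obtain rfl : i = Fin.last 0 := Subsingleton.elim _ _
    obtain rfl : j = Fin.last 0 := Subsingleton.elim _ _
    exact gthPsi_last P
  simp [hR, hG, hΨ]

theorem one_sub_eq_gth_factor : ∀ {N : ℕ} (P : Matrix (Fin N) (Fin N) ℝ),
    (∀ i, ∑ j, P i j = 1) → (∀ m, 1 ≤ m → m + 1 ≤ N → gthS P m ≠ 0) →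
    1 - P = (1 - gthRU P) * (1 - gthPsi P) * (1 - gthGL P)
  | 0, _, _, _ => Subsingleton.elim _ _
  -- `gthS P 0` is an empty sum, so `N = 1` is not an elimination step.
  | 1, P, _, _ => one_sub_eq_gth_factor_of_fin_one P
  | M + 2, P, hrow, hden => by
    have hS : gthS P (M + 1) ≠ 0 := hden (M + 1) (by omega) le_rfl
    refine one_sub_eq_gth_factor_of_gthStep hrow hS
      (one_sub_eq_gth_factor (gthStep P) (gthStep_rowSum hrow hS) fun m hm hmN => ?_)
    rw [← gthS_of_lt P (by omega)]
    exact hden m hm (by omega)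

theorem gth_RG_factorization_general {N : ℕ}
    (P : Matrix (Fin N) (Fin N) ℝ) (hP : RowStochastic P)
    (hden : ∀ m : ℕ, 1 ≤ m → m + 1 ≤ N → 0 < gthS P m) :
    (1 : Matrix (Fin N) (Fin N) ℝ) - P =
      (1 - gthRU P) * (1 - gthPsi P) * (1 - gthGL P) :=
  one_sub_eq_gth_factor P hP.2 fun m hm hmN => (hden m hm hmN).ne'

/-- RG-factorization of the GTH algorithm:
`I - P = (I - R_U) (I - Ψ_D) (I - G_L)`. -/
theorem gth_RG_factorization {N : ℕ}
    (P : Matrix (Fin N) (Fin N) ℝ) (hP : RowStochastic P) (hirr : MatIrreducible P)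
    (hden : ∀ m : ℕ, 1 ≤ m → m + 1 ≤ N → 0 < gthS P m) :
    (1 : Matrix (Fin N) (Fin N) ℝ) - P =
      (1 - gthRU P) * (1 - gthPsi P) * (1 - gthGL P) :=
  gth_RG_factorization_general P hP hden
end

section
/- Let P : ℕ → ℕ → ℝ≥0∞ be row-stochastic and let E ⊆ ℕ be nonempty. If a state i ∈ E is recurrent (P^{{i}} i i = 1), then the i-th row of the censored matrix sums to 1: ∑'_{j ∈ E} P^E i j = 1. In particular, if every state of P is recurrent, then the censored matrix P^E is row-stochastic on E. -/
open scoped ENNReal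

/-- The censored (taboo-path) transition probability: for a transition function `P` on `α`
and a censoring set `E`, `censored P E i j` is `P i j` plus the sum over all finite paths
through the complement of `E` from `i` to `j`. -/
noncomputable def censored {α : Type*} (P : α → α → ℝ≥0∞) (E : Set α) (i j : α) : ℝ≥0∞ :=
  P i j + ∑' (n : ℕ), ∑' (w : Fin (n + 1) → ↥Eᶜ),
    P i ↑(w 0) * (∏ k : Fin n, P ↑(w k.castSucc) ↑(w k.succ)) * P ↑(w (Fin.last n)) j

/-- A countable-state transition function is row-stochastic if each row sums to 1. -/
def RowStoch (P : ℕ → ℕ → ℝ≥0∞) : Prop := ∀ i, ∑' j, P i j = 1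

/-!
Let `S_n` be the probability that the chain started at `i` spends its first `n + 1` steps in
`Eᶜ`. Grouping the paths counted by `∑_{j ∈ E} P^E i j` by the time they enter `E`, and splitting
each row of `P` between `E` and `Eᶜ`, the paths entering `E` within `N + 1` steps carry mass
`1 - S_N`; so the row sum is `1 - inf_n S_n`. Shrinking `E` only enlarges the set of admissible
paths, so `S_n` for `E ∋ i` is dominated by `S_n` for `{i}`, whose infimum vanishes exactly when
`i` is recurrent.
-/

namespace Censored

variable {α : Type*} (P : α → α → ℝ≥0∞)

noncomputable def pathWeight (i : α) {n : ℕ} (w : Fin (n + 1) → α) : ℝ≥0∞ :=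
  P i (w 0) * ∏ k : Fin n, P (w k.castSucc) (w k.succ)

noncomputable def survivalMass (E : Set α) (i : α) (n : ℕ) : ℝ≥0∞ :=
  ∑' w : Fin (n + 1) → ↥Eᶜ, pathWeight P i (Subtype.val ∘ w)

noncomputable def exitMass (E : Set α) (i : α) (n : ℕ) : ℝ≥0∞ :=
  ∑' w : Fin (n + 1) → ↥Eᶜ,
    pathWeight P i (Subtype.val ∘ w) * ∑' j : ↥E, P (w (Fin.last n)) j

lemma pathWeight_snoc (i : α) {n : ℕ} (w : Fin (n + 1) → α) (x : α) :
    pathWeight P i (Fin.snoc w x : Fin (n + 2) → α) = pathWeight P i w * P (w (Fin.last n)) x := by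
  simp only [pathWeight, Fin.prod_univ_castSucc, Fin.snoc_castSucc, Fin.succ_castSucc,
    Fin.succ_last, Fin.snoc_last, mul_assoc]
  rw [show (0 : Fin (n + 2)) = Fin.castSucc 0 from rfl, Fin.snoc_castSucc]

lemma survivalMass_zero (E : Set α) (i : α) : survivalMass P E i 0 = ∑' j : ↥Eᶜ, P i j := by
  rw [survivalMass, ← (Equiv.funUnique (Fin 1) ↥Eᶜ).symm.tsum_eq]
  simp [pathWeight]

lemma survivalMass_succ (E : Set α) (i : α) (n : ℕ) :
    survivalMass P E i (n + 1) = ∑' w : Fin (n + 1) → ↥Eᶜ,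
      pathWeight P i (Subtype.val ∘ w) * ∑' j : ↥Eᶜ, P (w (Fin.last n)) j := by
  rw [survivalMass, ← (Fin.snocEquiv fun _ ↦ ↥Eᶜ).tsum_eq, ENNReal.tsum_prod', ENNReal.tsum_comm]
  refine tsum_congr fun w ↦ ?_
  rw [← ENNReal.tsum_mul_left]
  refine tsum_congr fun x ↦ ?_
  change pathWeight P i (Subtype.val ∘ Fin.snoc w x) = _
  rw [Fin.comp_snoc, pathWeight_snoc]
  rfl

variable {P}

lemma tsum_add_tsum_compl_eq_one (hP : ∀ x, ∑' y, P x y = 1) (x : α) (E : Set α) :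
    ∑' j : ↥E, P x j + ∑' j : ↥Eᶜ, P x j = 1 := by
  rw [ENNReal.summable.tsum_add_tsum_compl ENNReal.summable, hP x]

lemma survivalMass_eq_exitMass_add (hP : ∀ x, ∑' y, P x y = 1) (E : Set α) (i : α) (n : ℕ) :
    survivalMass P E i n = exitMass P E i n + survivalMass P E i (n + 1) := by
  rw [survivalMass_succ, exitMass, ← ENNReal.tsum_add]
  refine tsum_congr fun w ↦ ?_
  rw [← mul_add, tsum_add_tsum_compl_eq_one hP, mul_one]

lemma tsum_add_sum_exitMass_add_survivalMass (hP : ∀ x, ∑' y, P x y = 1) (E : Set α) (i : α)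
    (N : ℕ) :
    ∑' j : ↥E, P i j + ∑ n ∈ Finset.range N, exitMass P E i n + survivalMass P E i N = 1 := by
  induction N with
  | zero => simpa [survivalMass_zero] using tsum_add_tsum_compl_eq_one hP i E
  | succ N ih =>
    rw [Finset.sum_range_succ, ← ih, survivalMass_eq_exitMass_add hP E i N]
    ring

lemma survivalMass_le_one (hP : ∀ x, ∑' y, P x y = 1) (E : Set α) (i : α) (n : ℕ) :
    survivalMass P E i n ≤ 1 :=
  (tsum_add_sum_exitMass_add_survivalMass hP E i n).le.trans' le_add_self

lemma tsum_censored_eq_tsum_add_tsum_exitMass (E : Set α) (i : α) :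
    ∑' j : ↥E, censored P E i j = ∑' j : ↥E, P i j + ∑' n, exitMass P E i n := by
  calc ∑' j : ↥E, censored P E i j
      = ∑' j : ↥E, (P i j + ∑' n, ∑' w : Fin (n + 1) → ↥Eᶜ,
          pathWeight P i (Subtype.val ∘ w) * P (w (Fin.last n)) j) := rfl
    _ = ∑' j : ↥E, P i j + ∑' n, ∑' w : Fin (n + 1) → ↥Eᶜ, ∑' j : ↥E,
          pathWeight P i (Subtype.val ∘ w) * P (w (Fin.last n)) j := by
        rw [ENNReal.tsum_add, ENNReal.tsum_comm]
        simp_rw [ENNReal.tsum_comm (α := ↥E)]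
    _ = ∑' j : ↥E, P i j + ∑' n, exitMass P E i n := by
        simp_rw [ENNReal.tsum_mul_left, exitMass]

lemma tsum_censored_eq_one_sub_iInf_survivalMass (hP : ∀ x, ∑' y, P x y = 1) (E : Set α)
    (i : α) : ∑' j : ↥E, censored P E i j = 1 - ⨅ n, survivalMass P E i n := by
  rw [tsum_censored_eq_tsum_add_tsum_exitMass, ENNReal.sub_iInf, ENNReal.tsum_eq_iSup_nat,
    ENNReal.add_iSup]
  refine iSup_congr fun N ↦ ENNReal.eq_sub_of_add_eq ?_
    (tsum_add_sum_exitMass_add_survivalMass hP E i N)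
  exact ne_top_of_le_ne_top ENNReal.one_ne_top (survivalMass_le_one hP E i N)

lemma tsum_censored_eq_one_iff (hP : ∀ x, ∑' y, P x y = 1) (E : Set α) (i : α) :
    ∑' j : ↥E, censored P E i j = 1 ↔ ⨅ n, survivalMass P E i n = 0 := by
  have hle : ⨅ n, survivalMass P E i n ≤ 1 := (iInf_le _ 0).trans (survivalMass_le_one hP E i 0)
  rw [tsum_censored_eq_one_sub_iInf_survivalMass hP]
  constructor
  · intro h
    rw [← ENNReal.sub_sub_cancel ENNReal.one_ne_top hle, h, tsub_self]
  · intro h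
    rw [h, tsub_zero]

lemma survivalMass_anti {E F : Set α} (hEF : E ⊆ F) (i : α) (n : ℕ) :
    survivalMass P F i n ≤ survivalMass P E i n := by
  let ι : ↥Fᶜ → ↥Eᶜ := Set.inclusion (Set.compl_subset_compl.2 hEF)
  have hι : Function.Injective (ι ∘ · : (Fin (n + 1) → ↥Fᶜ) → Fin (n + 1) → ↥Eᶜ) :=
    (Set.inclusion_injective _).comp_left
  exact ENNReal.tsum_comp_le_tsum_of_injective hι (fun w ↦ pathWeight P i (Subtype.val ∘ w))

end Censored

open Censored

theorem censored_row_sum_of_recurrent_general (P : ℕ → ℕ → ℝ≥0∞) (hP : RowStoch P)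
    (E : Set ℕ) :
    (∀ i ∈ E, censored P {i} i i = 1 → ∑' j : ↥E, censored P E i ↑j = 1) ∧
      ((∀ i, censored P {i} i i = 1) →
        ∀ i ∈ E, ∑' j : ↥E, censored P E i ↑j = 1) := by
  have hrow : ∀ i ∈ E, censored P {i} i i = 1 → ∑' j : ↥E, censored P E i ↑j = 1 := by
    intro i hi hrec
    have hsingleton : ⨅ n, survivalMass P {i} i n = 0 := by
      rwa [← tsum_censored_eq_one_iff hP, tsum_singleton]
    rw [tsum_censored_eq_one_iff hP, ← nonpos_iff_eq_zero, ← hsingleton]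
    exact iInf_mono (survivalMass_anti (Set.singleton_subset_iff.2 hi) i)
  exact ⟨hrow, fun hall i hi ↦ hrow i hi (hall i)⟩

/-- If a state `i ∈ E` is recurrent (`P^{{i}} i i = 1`), then the `i`-th row of the
censored matrix `P^E` sums to 1; in particular, if every state is recurrent then `P^E`
is row-stochastic on `E`. -/
theorem censored_row_sum_of_recurrent (P : ℕ → ℕ → ℝ≥0∞) (hP : RowStoch P)
    (E : Set ℕ) (hE : E.Nonempty) :
    (∀ i ∈ E, censored P {i} i i = 1 → ∑' j : ↥E, censored P E i ↑j = 1) ∧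
      ((∀ i, censored P {i} i i = 1) →
        ∀ i ∈ E, ∑' j : ↥E, censored P E i ↑j = 1) :=
  censored_row_sum_of_recurrent_general P hP E
end

section
/- Let P : ℕ → ℕ → ℝ≥0∞ be row-stochastic and irreducible, and let E ⊆ ℕ be nonempty. Then the censored matrix P^E is irreducible on E: for all i, j ∈ E with i ≠ j, there exist m ≥ 1 and states i = x_0, x_1, …, x_m = j, all in E, with P^E x_t x_{t+1} > 0 for all t < m. -/
open scoped ENNReal

/-- A countable-state transition function `P` is irreducible if any two distinct states
are connected by a finite path of positive-probability transitions. -/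
def Irred (P : ℕ → ℕ → ℝ≥0∞) : Prop :=
  ∀ i j : ℕ, i ≠ j → ∃ m : ℕ, 1 ≤ m ∧ ∃ x : ℕ → ℕ,
    x 0 = i ∧ x m = j ∧ ∀ t < m, 0 < P (x t) (x (t + 1))

/-!
Cut a positive-probability path from `i` to `j` at its visits to `E`. Each piece is an excursion
with endpoints in `E` and interior in `Eᶜ`, and its weight is a summand of the taboo sum defining
`P^E`, so consecutive visits are joined by a positive censored step. The excursions are absorbed
one state at a time via the first-step bound `P i a * P^E a j ≤ P^E i j` for `a ∉ E`, which holds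
because prepending `a` maps taboo paths from `a` injectively to taboo paths from `i`.
-/

open Relation

namespace Relation

variable {α : Type*} {r : α → α → Prop}

lemma reflTransGen_of_path {m : ℕ} (x : ℕ → α) (h : ∀ t < m, r (x t) (x (t + 1))) :
    ReflTransGen r (x 0) (x m) :=
  (reflTransGen_of_succ_of_le (fun s t => r (x s) (x t)) (fun t ht => h t ht.2) m.zero_le).lift x
    fun _ _ => id

lemma TransGen.exists_path {a b : α} (h : TransGen r a b) :
    ∃ m, 1 ≤ m ∧ ∃ x : ℕ → α, x 0 = a ∧ x m = b ∧ ∀ t < m, r (x t) (x (t + 1)) := by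
  induction h using TransGen.head_induction_on with
  | @single a hab => exact ⟨1, le_rfl, fun t => if t = 0 then a else b, rfl, rfl, by simpa⟩
  | @head a c hac _ ih =>
    obtain ⟨m, -, x, rfl, rfl, hx⟩ := ih
    refine ⟨m + 1, by omega, fun | 0 => a | t + 1 => x t, rfl, rfl, ?_⟩
    rintro (_ | t) ht
    exacts [hac, hx t (by omega)]

end Relation

section Censored

variable {α : Type*} (P : α → α → ℝ≥0∞) (E : Set α)

lemma le_censored (i j : α) : P i j ≤ censored P E i j := le_self_add

lemma mul_censored_le_censored {i a : α} (ha : a ∉ E) (j : α) :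
    P i a * censored P E a j ≤ censored P E i j := by
  set f : ∀ n, (Fin (n + 1) → ↥Eᶜ) → ℝ≥0∞ := fun n w =>
    P i (w 0) * (∏ k : Fin n, P (w k.castSucc) (w k.succ)) * P (w (Fin.last n)) j
  have hcons : ∀ n (w : Fin (n + 1) → ↥Eᶜ),
      P i a * (P a (w 0) * (∏ k : Fin n, P (w k.castSucc) (w k.succ)) * P (w (Fin.last n)) j)
        = f (n + 1) (Fin.cons ⟨a, ha⟩ w) := by
    intro n w
    simp [f, Fin.prod_univ_succ, mul_assoc]
  calc P i a * censored P E a j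
      = f 0 (fun _ => ⟨a, ha⟩) + ∑' n, ∑' w, f (n + 1) (Fin.cons ⟨a, ha⟩ w) := by
        simp_rw [censored, mul_add, ← ENNReal.tsum_mul_left, hcons]
        simp [f]
    _ ≤ ∑' w, f 0 w + ∑' n, ∑' w, f (n + 1) w := by
        gcongr with n
        · exact ENNReal.le_tsum _
        · exact ENNReal.tsum_comp_le_tsum_of_injective (Fin.cons_right_injective _) _
    _ = ∑' n, ∑' w, f n w := (tsum_eq_zero_add' (f := fun n => ∑' w, f n w) ENNReal.summable).symm
    _ ≤ censored P E i j := le_add_self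

lemma censored_pos_of_reflTransGen {i a j : α} (hia : 0 < P i a)
    (h : ReflTransGen (fun x y => x ∉ E ∧ 0 < P x y) a j) : 0 < censored P E i j := by
  induction h using ReflTransGen.head_induction_on generalizing i with
  | refl => exact hia.trans_le (le_censored P E i j)
  | head hab _ ih =>
    exact (ENNReal.mul_pos hia.ne' (ih hab.2).ne').trans_le (mul_censored_le_censored P E hab.1 j)

/-- `c` is the first state of the path lying in `E`. -/
lemma exists_reflTransGen_censored {a b : α} (hb : b ∈ E)
    (h : ReflTransGen (fun x y => 0 < P x y) a b) :
    ∃ c : E, ReflTransGen (fun x y => x ∉ E ∧ 0 < P x y) a c ∧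
      ReflTransGen (fun x y : E => 0 < censored P E x y) c ⟨b, hb⟩ := by
  induction h using ReflTransGen.head_induction_on with
  | refl => exact ⟨⟨b, hb⟩, .refl, .refl⟩
  | @head a a' hpos _ ih =>
    obtain ⟨c, hexc, hcens⟩ := ih
    by_cases ha : a ∈ E
    · exact ⟨⟨a, ha⟩, .refl, hcens.head (censored_pos_of_reflTransGen P E hpos hexc)⟩
    · exact ⟨c, hexc.head ⟨ha, hpos⟩, hcens⟩

lemma reflTransGen_censored_of_reflTransGen {a b : α} (ha : a ∈ E) (hb : b ∈ E)
    (h : ReflTransGen (fun x y => 0 < P x y) a b) :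
    ReflTransGen (fun x y : E => 0 < censored P E x y) ⟨a, ha⟩ ⟨b, hb⟩ := by
  obtain ⟨c, hexc, hcens⟩ := exists_reflTransGen_censored P E hb h
  rcases hexc.cases_head with hac | ⟨_, ⟨ha', -⟩, -⟩
  · obtain rfl : c = ⟨a, ha⟩ := Subtype.ext hac.symm
    exact hcens
  · exact absurd ha ha'

end Censored

theorem censored_irreducible_general (P : ℕ → ℕ → ℝ≥0∞) (hirr : Irred P)
    (E : Set ℕ) :
    ∀ i ∈ E, ∀ j ∈ E, i ≠ j → ∃ m : ℕ, 1 ≤ m ∧ ∃ x : ℕ → ℕ,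
      x 0 = i ∧ x m = j ∧ (∀ t ≤ m, x t ∈ E) ∧
      ∀ t < m, 0 < censored P E (x t) (x (t + 1)) := by
  intro i hi j hj hij
  obtain ⟨m, -, x, rfl, rfl, hx⟩ := hirr i j hij
  have hcens := reflTransGen_censored_of_reflTransGen P E hi hj (reflTransGen_of_path x hx)
  obtain ⟨m', hm', y, hy0, hym, hy⟩ := ((reflTransGen_iff_eq_or_transGen.1 hcens).resolve_left
    fun h => hij (congrArg Subtype.val h).symm).exists_path
  exact ⟨m', hm', fun t => y t, by simp [hy0], by simp [hym], fun t _ => (y t).2, hy⟩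

/-- If `P` is row-stochastic and irreducible, then the censored matrix `P^E` is
irreducible on `E`: distinct states of `E` are connected by paths staying in `E` whose
steps have positive censored transition probability. -/
theorem censored_irreducible (P : ℕ → ℕ → ℝ≥0∞) (hP : RowStoch P) (hirr : Irred P)
    (E : Set ℕ) (hE : E.Nonempty) :
    ∀ i ∈ E, ∀ j ∈ E, i ≠ j → ∃ m : ℕ, 1 ≤ m ∧ ∃ x : ℕ → ℕ,
      x 0 = i ∧ x m = j ∧ (∀ t ≤ m, x t ∈ E) ∧
      ∀ t < m, 0 < censored P E (x t) (x (t + 1)) :=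
  censored_irreducible_general P hirr E
end

section
/- Let P : ℕ → ℕ → ℝ≥0∞ be row-stochastic and irreducible, and suppose P has a stationary probability vector π : ℕ → ℝ≥0∞, i.e. ∑'_k π k = 1 and π j = ∑'_i π i * P i j for all j. Let E ⊆ ℕ be nonempty. Then s := ∑'_{k ∈ E} π k satisfies 0 < s, and the vector π^E defined on E by π^E_j = π_j / s is a stationary probability vector of the censored matrix: ∑'_{j ∈ E} π^E_j = 1 and π^E_j = ∑'_{i ∈ E} π^E_i * P^E i j for all j ∈ E. -/
open scoped ENNReal

/-!
Write `T` for one step of the chain counted only from states of `Eᶜ` (`tabooStep P Eᶜ`).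
Stationarity splits `π = (1_E π) P + T π`, and iterating gives
`π = ∑_{n<N} Tⁿ ((1_E π) P) + T^N π`. The `n`-th term is the contribution of the taboo paths
with `n` intermediate states to `∑_{i ∈ E} π_i P^E_{ij}`, so it remains to show that the
decreasing remainder `T^N π` tends to `0`. Its limit `r` is a summable fixed point of the
substochastic `T`; conservation of mass forces the support of `r` to be a subset of `Eᶜ` closed
under positive transitions, which irreducibility rules out unless `r = 0`.
Dividing by `s = ∑_{k ∈ E} π_k` gives the claim; `s ≠ 0` since otherwise the identity would
make `π` vanish.
-/

open Finset Function

namespace ENNReal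

theorem tsum_iInf_of_antitone {ι : Type*} {f : ℕ → ι → ℝ≥0∞} (hf : Antitone f)
    (h0 : ∑' i, f 0 i ≠ ∞) : ∑' i, ⨅ n, f n i = ⨅ n, ∑' i, f n i := by
  let : MeasurableSpace ι := ⊤
  simp only [← MeasureTheory.lintegral_count' measurable_from_top] at h0 ⊢
  exact MeasureTheory.lintegral_iInf (fun _ => measurable_from_top) hf h0

theorem eq_of_le_of_tsum_eq {ι : Type*} {f g : ι → ℝ≥0∞} (hfg : f ≤ g)
    (h : ∑' i, f i = ∑' i, g i) (hg : ∑' i, g i ≠ ∞) : f = g := by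
  by_contra hne
  obtain ⟨i, hi⟩ := Function.ne_iff.mp hne
  exact (ENNReal.tsum_lt_tsum (h ▸ hg) hfg ((hfg i).lt_of_ne hi)).ne h

theorem eq_tsum_add_iInf {x : ℝ≥0∞} {f g : ℕ → ℝ≥0∞}
    (h : ∀ N, x = ∑ n ∈ range N, f n + g N) : x = ∑' n, f n + ⨅ N, g N := by
  refine le_antisymm ?_ ?_
  · rw [ENNReal.add_iInf]
    exact le_iInf fun N => (h N).trans_le (by gcongr; exact ENNReal.sum_le_tsum _)
  · rw [ENNReal.tsum_eq_iSup_nat, ENNReal.iSup_add]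
    exact iSup_le fun N => (h N).trans_ge (by gcongr; exact iInf_le _ N)

end ENNReal

namespace AddMonoidHom

variable {M : Type*} [AddCommMonoid M] (f : M →+ M) {a x : M}

theorem eq_sum_iterate_add_iterate (hx : x = a + f x) (N : ℕ) :
    x = ∑ n ∈ Finset.range N, f^[n] a + f^[N] x := by
  induction N with
  | zero => simp
  | succ N ih =>
    rw [sum_range_succ, add_assoc, iterate_succ_apply, ← iterate_map_add, ← hx]
    exact ih

theorem antitone_iterate_of_eq_add [PartialOrder M] [CanonicallyOrderedAdd M]
    (hx : x = a + f x) : Antitone fun N => f^[N] x :=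
  antitone_nat_of_succ_le fun N => calc
    f^[N + 1] x ≤ f^[N] a + f^[N + 1] x := le_add_self
    _ = f^[N] x := by rw [iterate_succ_apply, ← iterate_map_add, ← hx]

end AddMonoidHom

section Taboo

variable {α : Type*} (P : α → α → ℝ≥0∞) (S : Set α)

/-- `μ ↦ (1_S μ) P`: the row vector `μ` moved one step, starting only from states in `S`. -/
noncomputable def tabooStep : (α → ℝ≥0∞) →+ (α → ℝ≥0∞) where
  toFun μ j := ∑' u : S, μ u * P u j
  map_zero' := by ext; simp
  map_add' μ ν := by ext j; simp [add_mul, ENNReal.tsum_add]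

theorem tabooStep_apply (μ : α → ℝ≥0∞) (j : α) :
    tabooStep P S μ j = ∑' u : S, μ u * P u j := rfl

theorem tabooStep_add_tabooStep_compl (μ : α → ℝ≥0∞) (j : α) :
    tabooStep P S μ j + tabooStep P Sᶜ μ j = ∑' i, μ i * P i j :=
  Summable.tsum_add_tsum_compl (f := fun i => μ i * P i j)
    ENNReal.summable ENNReal.summable

theorem iterate_tabooStep_tsum_mul {ι : Type*} (c : ι → ℝ≥0∞) (μ : ι → α → ℝ≥0∞) (n : ℕ)
    (j : α) : (tabooStep P S)^[n] (fun k => ∑' i, c i * μ i k) j =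
      ∑' i, c i * (tabooStep P S)^[n] (μ i) j := by
  induction n generalizing j with
  | zero => rfl
  | succ n ih =>
    simp only [iterate_succ_apply', tabooStep_apply, ih, ← ENNReal.tsum_mul_right,
      ← ENNReal.tsum_mul_left, mul_assoc]
    exact ENNReal.tsum_comm

theorem tsum_tabooPath_eq_iterate (i j : α) (n : ℕ) :
    ∑' w : Fin (n + 1) → S,
      P i (w 0) * (∏ k : Fin n, P (w k.castSucc) (w k.succ)) * P (w (Fin.last n)) j =
      (tabooStep P S)^[n + 1] (P i) j := by
  induction n generalizing j with
  | zero =>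
    rw [← (Equiv.funUnique (Fin 1) S).symm.tsum_eq (f := fun w =>
      P i (w 0) * (∏ k : Fin 0, P (w k.castSucc) (w k.succ)) * P (w (Fin.last 0)) j)]
    simp [tabooStep_apply]
  | succ n ih =>
    rw [iterate_succ_apply', tabooStep_apply,
      ← (Fin.snocEquiv fun _ => S).tsum_eq (_ : _ → ℝ≥0∞), ENNReal.tsum_prod']
    refine tsum_congr fun v => ?_
    rw [← ih, ← ENNReal.tsum_mul_right]
    refine tsum_congr fun w => ?_
    simp [Fin.snocEquiv, Fin.prod_univ_castSucc, Fin.succ_castSucc, -Fin.castSucc_succ,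
      mul_assoc]

theorem censored_eq_tsum_iterate (E : Set α) (i j : α) :
    censored P E i j = ∑' n, (tabooStep P Eᶜ)^[n] (P i) j := by
  rw [tsum_eq_zero_add' ENNReal.summable]
  simp only [censored, tsum_tabooPath_eq_iterate, iterate_zero_apply]

variable {P S}

theorem eq_tabooStep_add_tabooStep_compl {π : α → ℝ≥0∞}
    (hstat : ∀ j, π j = ∑' i, π i * P i j) :
    π = tabooStep P S π + tabooStep P Sᶜ π :=
  funext fun j => (hstat j).trans (tabooStep_add_tabooStep_compl P S π j).symm

theorem tabooStep_iInf {μ : ℕ → α → ℝ≥0∞} (hμ : Antitone μ)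
    (hfin : ∀ j, tabooStep P S (μ 0) j ≠ ∞) (hP : ∀ i j, P i j ≠ ∞) :
    tabooStep P S (fun j => ⨅ n, μ n j) = fun j => ⨅ n, tabooStep P S (μ n) j := by
  ext j
  simp only [tabooStep_apply, ENNReal.iInf_mul fun h => absurd h (hP _ j)]
  exact ENNReal.tsum_iInf_of_antitone (fun _ _ hmn u => mul_le_mul_left (hμ hmn u) _)
    (hfin j)

/-- Mass conservation: `r` only charges states from which the chain cannot leave `S`. -/
theorem mem_and_ne_zero_of_tabooStep_eq_self (hP : ∀ i, ∑' j, P i j ≤ 1) {r : α → ℝ≥0∞}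
    (hr : tabooStep P S r = r) (hfin : ∑' u : S, r u ≠ ∞) {u : α} (hu : u ∈ S) (hru : r u ≠ 0)
    {b : α} (hb : 0 < P u b) : b ∈ S ∧ r b ≠ 0 := by
  have hmass : ∑' v : S, r v * ∑' w : S, P v w = ∑' w : S, r w := calc
    _ = ∑' w : S, ∑' v : S, r v * P v w := by
      simp_rw [← ENNReal.tsum_mul_left]; exact ENNReal.tsum_comm
    _ = ∑' w : S, r w := tsum_congr fun w => congr_fun hr w
  have hstay : ∑' w : S, P u w = 1 := by
    have hle : (fun v : S => r v * ∑' w : S, P v w) ≤ fun v : S => r v := fun v =>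
      mul_le_of_le_one_right' ((ENNReal.tsum_comp_le_tsum_of_injective
        Subtype.val_injective _).trans (hP v))
    have := congr_fun (ENNReal.eq_of_le_of_tsum_eq hle hmass hfin) ⟨u, hu⟩
    exact (ENNReal.mul_eq_left hru (ne_top_of_le_ne_top hfin
      (ENNReal.le_tsum (⟨u, hu⟩ : S)))).mp this
  have hleave : ∑' w : ↥Sᶜ, P u w = 0 := by
    have := (Summable.tsum_add_tsum_compl (s := S) ENNReal.summable ENNReal.summable).trans_le
      (hP u)
    rw [hstay] at this
    exact nonpos_iff_eq_zero.mp
      (ENNReal.le_of_add_le_add_left ENNReal.one_ne_top (this.trans_eq (add_zero 1).symm))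
  have hbS : b ∈ S := by
    by_contra hbS
    exact hb.ne' (ENNReal.tsum_eq_zero.mp hleave ⟨b, hbS⟩)
  refine ⟨hbS, ?_⟩
  rw [← congr_fun hr b, tabooStep_apply]
  exact ((ENNReal.mul_pos hru hb.ne').trans_le (ENNReal.le_tsum (⟨u, hu⟩ : S))).ne'

end Taboo

theorem Irred.mem_of_closed {P : ℕ → ℕ → ℝ≥0∞} (hirr : Irred P) {C : Set ℕ}
    (hC : ∀ u ∈ C, ∀ b, 0 < P u b → b ∈ C) {i : ℕ} (hi : i ∈ C) (j : ℕ) : j ∈ C := by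
  rcases eq_or_ne i j with rfl | hij
  · exact hi
  obtain ⟨m, -, x, hx0, hxm, hpos⟩ := hirr i j hij
  have hpath : ∀ t ≤ m, x t ∈ C := by
    intro t
    induction t with
    | zero => intro _; rwa [hx0]
    | succ t ih => intro ht; exact hC _ (ih (by omega)) _ (hpos t (by omega))
  simpa [hxm] using hpath m le_rfl

section Stationary

variable {P : ℕ → ℕ → ℝ≥0∞} {π : ℕ → ℝ≥0∞} {E : Set ℕ}

theorem iInf_iterate_tabooStep_eq_zero (hP : RowStoch P) (hirr : Irred P)
    (hsum : ∑' k, π k = 1) (hstat : ∀ j, π j = ∑' i, π i * P i j) (hE : E.Nonempty) (j : ℕ) :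
    ⨅ N, (tabooStep P Eᶜ)^[N] π j = 0 := by
  set T := tabooStep P Eᶜ
  have hsplit : π = tabooStep P E π + T π := eq_tabooStep_add_tabooStep_compl hstat
  have hanti := T.antitone_iterate_of_eq_add hsplit
  have hπ : ∀ k, π k ≠ ∞ := fun k =>
    ne_top_of_le_ne_top (hsum ▸ ENNReal.one_ne_top) (ENNReal.le_tsum k)
  have hPfin : ∀ i j, P i j ≠ ∞ := fun i j =>
    ne_top_of_le_ne_top ENNReal.one_ne_top ((ENNReal.le_tsum j).trans_eq (hP i))
  set r : ℕ → ℝ≥0∞ := fun j => ⨅ N, T^[N] π j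
  have hfix : T r = r := by
    rw [tabooStep_iInf hanti (fun j => ne_top_of_le_ne_top (hπ j)
      (le_add_self.trans_eq (congr_fun hsplit j).symm)) hPfin]
    ext j
    calc ⨅ n, T (T^[n] π) j = ⨅ n, T^[n + 1] π j := by simp only [iterate_succ_apply']
      _ = r j := Antitone.iInf_nat_add (fun _ _ hmn => hanti hmn j) 1
  have hrfin : ∑' u : ↥Eᶜ, r u ≠ ∞ := by
    refine ne_top_of_le_ne_top (hsum ▸ ENNReal.one_ne_top) ?_
    exact (ENNReal.tsum_le_tsum fun u => iInf_le _ 0).trans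
      (ENNReal.tsum_comp_le_tsum_of_injective Subtype.val_injective π)
  have hrS : ∀ u ∈ Eᶜ, r u = 0 := by
    intro u hu
    by_contra hru
    obtain ⟨e, he⟩ := hE
    have := hirr.mem_of_closed (C := {v | v ∈ Eᶜ ∧ r v ≠ 0})
      (fun v hv b hb => mem_and_ne_zero_of_tabooStep_eq_self (fun i => (hP i).le) hfix
        hrfin hv.1 hv.2 hb) ⟨hu, hru⟩ e
    exact this.1 he
  calc r j = T r j := (congr_fun hfix j).symm
    _ = 0 := ENNReal.tsum_eq_zero.mpr fun u => by rw [hrS u u.2, zero_mul]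

theorem tsum_mul_censored_eq (hP : RowStoch P) (hirr : Irred P)
    (hsum : ∑' k, π k = 1) (hstat : ∀ j, π j = ∑' i, π i * P i j) (hE : E.Nonempty) (j : ℕ) :
    ∑' i : E, π i * censored P E i j = π j := by
  set T := tabooStep P Eᶜ
  have hexpand : π j = ∑' n, T^[n] (tabooStep P E π) j + ⨅ N, T^[N] π j :=
    ENNReal.eq_tsum_add_iInf fun N => by
      simpa only [Finset.sum_apply, Pi.add_apply] using
        congr_fun (T.eq_sum_iterate_add_iterate (eq_tabooStep_add_tabooStep_compl hstat) N) j
  rw [hexpand, iInf_iterate_tabooStep_eq_zero hP hirr hsum hstat hE, add_zero]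
  simp_rw [censored_eq_tsum_iterate, ← ENNReal.tsum_mul_left]
  rw [ENNReal.tsum_comm]
  exact tsum_congr fun n =>
    (iterate_tabooStep_tsum_mul P Eᶜ (fun i : E => π i) (fun i => P i) n j).symm

end Stationary

/-- If `π` is a stationary probability vector of the row-stochastic irreducible chain `P`
and `E` is nonempty, then `s = ∑_{k ∈ E} π_k > 0` and `π^E_j = π_j / s` is a stationary
probability vector of the censored matrix `P^E`. -/
theorem censored_stationary_countable (P : ℕ → ℕ → ℝ≥0∞) (hP : RowStoch P)
    (hirr : Irred P)
    (π : ℕ → ℝ≥0∞) (hsum : ∑' k, π k = 1) (hstat : ∀ j, π j = ∑' i, π i * P i j)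
    (E : Set ℕ) (hE : E.Nonempty) :
    0 < ∑' k : ↥E, π ↑k ∧
      (∑' j : ↥E, π ↑j / ∑' k : ↥E, π ↑k) = 1 ∧
      ∀ j ∈ E, π j / (∑' k : ↥E, π ↑k) =
        ∑' i : ↥E, (π ↑i / ∑' k : ↥E, π ↑k) * censored P E ↑i j := by
  have hid := tsum_mul_censored_eq hP hirr hsum hstat hE
  set s := ∑' k : ↥E, π ↑k
  have hs0 : s ≠ 0 := by
    intro hs
    have hπ : ∀ j, π j = 0 := fun j => by
      rw [← hid j]
      simp only [ENNReal.tsum_eq_zero.mp hs, zero_mul, tsum_zero]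
    simp [hπ] at hsum
  have hstop : s ≠ ∞ := ne_top_of_le_ne_top (hsum ▸ ENNReal.one_ne_top)
    (ENNReal.tsum_comp_le_tsum_of_injective Subtype.val_injective π)
  refine ⟨pos_iff_ne_zero.mpr hs0, ?_, fun j _ => ?_⟩
  · simp_rw [div_eq_mul_inv]
    rw [ENNReal.tsum_mul_right, ENNReal.mul_inv_cancel hs0 hstop]
  · simp_rw [← hid j, div_eq_mul_inv, ← ENNReal.tsum_mul_right, mul_right_comm]
end

section
/- (Transitivity of censoring.) Let P : ℕ → ℕ → ℝ≥0∞ be row-stochastic and let E_2 ⊆ E_1 ⊆ ℕ be nonempty sets. Then censoring in two stages agrees with censoring in one stage: for all i, j ∈ E_2, ((P^{E_1})^{E_2}) i j = (P^{E_2}) i j, where the outer censoring is applied to the function P^{E_1} : E_1 → E_1 → ℝ≥0∞ with censoring set E_2 ⊆ E_1. -/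
open scoped ENNReal

/-!
Censoring to `E` sums the weights of all finite words over `Eᶜ`. As `E₂ᶜ` is the disjoint union
of `E₁ \ E₂` and `E₁ᶜ`, group the words over `E₂ᶜ` by their subsequence `c₁ ⋯ cₖ` of letters in
`E₁ \ E₂`. The remaining letters form `k + 1` independent blocks in `E₁ᶜ` (before, between and
after the `cᵢ`), and summing out each block gives one step of the chain censored to `E₁`. All sums
are in `ℝ≥0∞`, so they can be regrouped freely.
-/

section PathSum

variable {α : Type*} (P : α → α → ℝ≥0∞)

noncomputable def pathWeight : α → List α → α → ℝ≥0∞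
  | i, [], j => P i j
  | i, a :: l, j => P i a * pathWeight a l j

theorem pathWeight_append (i c j : α) (l₁ l₂ : List α) :
    pathWeight P i (l₁ ++ c :: l₂) j = pathWeight P i l₁ c * pathWeight P c l₂ j := by
  induction l₁ generalizing i with
  | nil => rfl
  | cons a l₁ ih => simp only [List.cons_append, pathWeight, ih, mul_assoc]

theorem pathWeight_ofFn (i j : α) {n : ℕ} (v : Fin (n + 1) → α) :
    pathWeight P i (List.ofFn v) j =
      P i (v 0) * (∏ k : Fin n, P (v k.castSucc) (v k.succ)) * P (v (Fin.last n)) j := by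
  induction n generalizing i with
  | zero => simp [pathWeight, Fin.last]
  | succ n ih =>
    rw [List.ofFn_succ, pathWeight, ih, Fin.prod_univ_succ]
    simp only [Fin.castSucc_zero, Fin.succ_castSucc, Fin.succ_last]
    ring

theorem pathWeight_comap {β : Type*} (f : β → α) (i j : β) (l : List β) :
    pathWeight (fun a b => P (f a) (f b)) i l j = pathWeight P (f i) (l.map f) (f j) := by
  induction l generalizing i with
  | nil => rfl
  | cons a l ih => simp only [pathWeight, List.map_cons, ih]

noncomputable def pathSum {σ : Type*} (v : σ → α) (i j : α) : ℝ≥0∞ :=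
  ∑' l : List σ, pathWeight P i (l.map v) j

theorem pathSum_comp_equiv {σ τ : Type*} (v : τ → α) (e : σ ≃ τ) (i j : α) :
    pathSum P (v ∘ e) i j = pathSum P v i j := by
  rw [pathSum, pathSum, ← (Equiv.listEquivOfEquiv e).tsum_eq]
  simp [Equiv.listEquivOfEquiv, List.map_map]

theorem pathSum_comap {β σ : Type*} (f : β → α) (v : σ → β) (i j : β) :
    pathSum (fun a b => P (f a) (f b)) v i j = pathSum P (f ∘ v) (f i) (f j) := by
  simp only [pathSum, pathWeight_comap, List.map_map]

theorem censored_eq_pathSum (E : Set α) (i j : α) :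
    censored P E i j = pathSum P (Subtype.val : ↥Eᶜ → α) i j := by
  rw [pathSum, ← List.equivSigmaTuple.symm.tsum_eq, ENNReal.tsum_sigma',
    tsum_eq_zero_add' ENNReal.summable, censored]
  congr 1
  · rw [tsum_eq_single Fin.elim0 fun w hw => (hw (Subsingleton.elim _ _)).elim]
    rfl
  · refine tsum_congr fun n => tsum_congr fun w => ?_
    rw [List.equivSigmaTuple_symm_apply, List.map_ofFn, pathWeight_ofFn]
    rfl

end PathSum

section SumWords

variable {γ δ : Type*}

def splitAtInl : List (γ ⊕ δ) → List δ ⊕ (List δ × γ × List (γ ⊕ δ))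
  | [] => .inl []
  | .inl c :: w => .inr ([], c, w)
  | .inr d :: w => (splitAtInl w).map (d :: ·) fun p => (d :: p.1, p.2)

def splitAtInlEquiv (γ δ : Type*) :
    List (γ ⊕ δ) ≃ List δ ⊕ (List δ × γ × List (γ ⊕ δ)) where
  toFun := splitAtInl
  invFun := Sum.elim (List.map .inr) fun p => p.1.map .inr ++ .inl p.2.1 :: p.2.2
  left_inv w := by
    induction w with
    | nil => rfl
    | cons x w ih =>
      rcases x with c | d
      · rfl
      · rw [splitAtInl]
        rcases h : splitAtInl w <;> rw [h] at ih <;> simp_all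
  right_inv s := by
    rcases s with m | ⟨m, c, w⟩ <;> induction m <;> simp_all [splitAtInl]

theorem ENNReal.tsum_list_sum_split (f : List (γ ⊕ δ) → ℝ≥0∞) :
    ∑' w, f w = ∑' m : List δ, f (m.map .inr) +
      ∑' (m : List δ) (c : γ) (w : List (γ ⊕ δ)), f (m.map .inr ++ .inl c :: w) := by
  rw [← (splitAtInlEquiv γ δ).symm.tsum_eq, Summable.tsum_sum ENNReal.summable ENNReal.summable,
    ENNReal.tsum_prod']
  simp only [ENNReal.tsum_prod']
  rfl

end SumWords

section Skeleton

variable {α γ δ : Type*} (P : α → α → ℝ≥0∞) (vγ : γ → α) (vδ : δ → α)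

@[simp]
theorem filterMap_getLeft?_map_inr (m : List δ) :
    (m.map Sum.inr).filterMap Sum.getLeft? = ([] : List γ) := by
  simp [List.filterMap_map, Function.comp_def]

theorem tsum_pathWeight_filterMap_getLeft?_eq [DecidableEq γ] (l : List γ) (i j : α) :
    ∑' w : List (γ ⊕ δ), (if w.filterMap Sum.getLeft? = l then
      pathWeight P i (w.map (Sum.elim vγ vδ)) j else 0) =
      pathWeight (pathSum P vδ) i (l.map vγ) j := by
  induction l generalizing i with
  | nil =>
    rw [ENNReal.tsum_list_sum_split]
    simp [pathSum, pathWeight, List.map_map]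
  | cons c l ih =>
    rw [ENNReal.tsum_list_sum_split]
    calc _ = ∑' m : List δ, pathWeight P i (m.map vδ) (vγ c) * ∑' w : List (γ ⊕ δ),
          (if w.filterMap Sum.getLeft? = l then
            pathWeight P (vγ c) (w.map (Sum.elim vγ vδ)) j else 0) := by
          simp only [filterMap_getLeft?_map_inr, List.nil_eq, reduceCtorEq, ↓reduceIte, tsum_zero,
            List.filterMap_append, Sum.getLeft?_inl, Option.some.injEq, List.filterMap_cons_some,
            List.nil_append, List.cons.injEq, List.map_append, List.map_map, Sum.elim_comp_inr,
            List.map_cons, Sum.elim_inl, pathWeight_append, zero_add]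
          refine tsum_congr fun m => ?_
          rw [tsum_eq_single c, ← ENNReal.tsum_mul_left]
          · simp
          · intro c' hc'
            simp [hc']
      _ = _ := by rw [ih, ENNReal.tsum_mul_right]; rfl

theorem pathSum_sum_elim (i j : α) :
    pathSum P (Sum.elim vγ vδ) i j = pathSum (pathSum P vδ) vγ i j := by
  classical
  calc pathSum P (Sum.elim vγ vδ) i j
      = ∑' (w : List (γ ⊕ δ)) (l : List γ), if w.filterMap Sum.getLeft? = l then
          pathWeight P i (w.map (Sum.elim vγ vδ)) j else 0 := by
        simp only [pathSum, tsum_ite_eq']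
    _ = pathSum (pathSum P vδ) vγ i j := by
        rw [ENNReal.tsum_comm]
        exact tsum_congr fun l => tsum_pathWeight_filterMap_getLeft?_eq P vγ vδ l i j

end Skeleton

def complSumComplEquiv {α : Type*} {E₁ E₂ : Set α} (h : E₂ ⊆ E₁) [DecidablePred (· ∈ E₁)] :
    ↥({x : ↥E₁ | ↑x ∈ E₂}ᶜ) ⊕ ↥E₁ᶜ ≃ ↥E₂ᶜ :=
  (Equiv.sumCongr ⟨fun x => ⟨⟨x.1, x.2⟩, x.1.2⟩, fun x => ⟨⟨x.1, x.2⟩, x.1.2⟩, fun _ => rfl, fun _ => rfl⟩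
    ⟨fun x => ⟨⟨x, fun hx => x.2 (h hx)⟩, x.2⟩, fun x => ⟨x.1, x.2⟩, fun _ => rfl, fun _ => rfl⟩).trans
    (Equiv.Set.sumCompl {x : ↥E₂ᶜ | (x : α) ∈ E₁})

theorem censored_transitive_general (P : ℕ → ℕ → ℝ≥0∞)
    (E₁ E₂ : Set ℕ) (h21 : E₂ ⊆ E₁)
    (i j : ℕ) (hi : i ∈ E₂) (hj : j ∈ E₂) :
    censored (fun a b : ↥E₁ => censored P E₁ ↑a ↑b) {x : ↥E₁ | ↑x ∈ E₂}
        ⟨i, h21 hi⟩ ⟨j, h21 hj⟩ =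
      censored P E₂ i j := by
  classical
  have hQ : (fun a b : ↥E₁ => censored P E₁ ↑a ↑b) =
      fun a b : ↥E₁ => pathSum P (Subtype.val : ↥E₁ᶜ → ℕ) ↑a ↑b := by
    simp only [censored_eq_pathSum]
  rw [censored_eq_pathSum, hQ, pathSum_comap, ← pathSum_sum_elim, censored_eq_pathSum,
    ← pathSum_comp_equiv P _ (complSumComplEquiv h21)]
  congr 1
  funext s
  rcases s with _ | _ <;> rfl

/-- Transitivity of censoring: for nonempty `E₂ ⊆ E₁`, censoring in two stages
(first to `E₁`, then to `E₂` viewed inside `E₁`) agrees with censoring directly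
to `E₂`. -/
theorem censored_transitive (P : ℕ → ℕ → ℝ≥0∞) (hP : RowStoch P)
    (E₁ E₂ : Set ℕ) (h21 : E₂ ⊆ E₁) (h1 : E₁.Nonempty) (h2 : E₂.Nonempty)
    (i j : ℕ) (hi : i ∈ E₂) (hj : j ∈ E₂) :
    censored (fun a b : ↥E₁ => censored P E₁ ↑a ↑b) {x : ↥E₁ | ↑x ∈ E₂}
        ⟨i, h21 hi⟩ ⟨j, h21 hj⟩ =
      censored P E₂ i j :=
  censored_transitive_general P E₁ E₂ h21 i j hi hj
end

section
/- Let P be an N×N row-stochastic matrix (N ≥ 2) with ∑_{k=1}^{N−1} p_{N,k} > 0, let P⁽ᴺ⁻¹⁾ be the result of one GTH elimination step, and let π' = (π'_1, …, π'_{N−1}) be any nonnegative vector satisfying π'_j = ∑_{i=1}^{N−1} π'_i p⁽ᴺ⁻¹⁾_{i,j} for all 1 ≤ j ≤ N−1. Define π_N := (∑_{i=1}^{N−1} π'_i p_{i,N}) / (∑_{k=1}^{N−1} p_{N,k}). Then the extended vector (π'_1, …, π'_{N−1}, π_N) satisfies the full stationary equations of P: π_j = ∑_{i=1}^{N} π_i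 p_{i,j} for all 1 ≤ j ≤ N. (This justifies recovering the stationary vector of P from that of the eliminated chain in the GTH back substitution.) -/
/-! The eliminated chain `gthStep P` is the chain `P` watched only off the last state `N`:
a visit to `N` is replaced by the jump out of `N`, distributed in proportion to the last row.
Extending `π'` by `π_N` makes the mass flowing into `N` equal to the mass leaving it, and the
mass leaving `N` towards `j` is exactly the correction term of `gthStep P` in column `j`. -/

open Matrix

section

variable {n : ℕ} (P : Matrix (Fin (n + 1)) (Fin (n + 1)) ℝ) (π' : Fin n → ℝ)

noncomputable def gthBackSubst : Fin (n + 1) → ℝ :=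
  Fin.snoc π'
    ((∑ i : Fin n, π' i * P i.castSucc (Fin.last n)) / ∑ k : Fin n, P (Fin.last n) k.castSucc)

theorem gthBackSubst_vecMul_castSucc (j : Fin n) :
    (gthBackSubst P π' ᵥ* P) j.castSucc = (π' ᵥ* gthStep P) j := by
  simp only [vecMul, dotProduct, Fin.sum_univ_castSucc, gthBackSubst, Fin.snoc_castSucc,
    Fin.snoc_last, gthStep, div_mul_eq_mul_div, Finset.sum_mul, Finset.sum_div,
    ← Finset.sum_add_distrib]
  exact Finset.sum_congr rfl fun i _ => by ring

theorem gthBackSubst_vecMul_last (hrow : ∑ j, P (Fin.last n) j = 1)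
    (hS : ∑ k : Fin n, P (Fin.last n) k.castSucc ≠ 0) :
    (gthBackSubst P π' ᵥ* P) (Fin.last n) = gthBackSubst P π' (Fin.last n) := by
  rw [Fin.sum_univ_castSucc] at hrow
  have hdiag : P (Fin.last n) (Fin.last n) = 1 - ∑ k : Fin n, P (Fin.last n) k.castSucc := by
    linarith
  simp only [vecMul, dotProduct, Fin.sum_univ_castSucc, gthBackSubst, Fin.snoc_castSucc,
    Fin.snoc_last, hdiag]
  field_simp
  ring

theorem gthBackSubst_vecMul (hrow : ∑ j, P (Fin.last n) j = 1)
    (hS : ∑ k : Fin n, P (Fin.last n) k.castSucc ≠ 0) (hstat : π' ᵥ* gthStep P = π') :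
    gthBackSubst P π' ᵥ* P = gthBackSubst P π' := by
  funext j
  refine Fin.lastCases (gthBackSubst_vecMul_last P π' hrow hS) (fun j => ?_) j
  rw [gthBackSubst_vecMul_castSucc, hstat, gthBackSubst, Fin.snoc_castSucc]

end

theorem gthStep_back_substitution_general {n : ℕ}
    (P : Matrix (Fin (n + 1)) (Fin (n + 1)) ℝ) (hP : RowStochastic P)
    (hS : 0 < ∑ k : Fin n, P (Fin.last n) k.castSucc)
    (π' : Fin n → ℝ)
    (hstat : ∀ j : Fin n, π' j = ∑ i : Fin n, π' i * gthStep P i j)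
    (πfull : Fin (n + 1) → ℝ)
    (hfull : πfull = Fin.snoc π'
      ((∑ i : Fin n, π' i * P i.castSucc (Fin.last n)) /
        ∑ k : Fin n, P (Fin.last n) k.castSucc)) :
    ∀ j : Fin (n + 1), πfull j = ∑ i : Fin (n + 1), πfull i * P i j := by
  have hstat' : π' ᵥ* gthStep P = π' := funext fun j => (hstat j).symm
  have h := gthBackSubst_vecMul P π' (hP.2 _) hS.ne' hstat'
  subst hfull
  exact fun j => (congrFun h j).symm

/-- GTH back substitution: any nonnegative solution `π'` of the eliminated system extends,
via `π_N := (∑_{i<N} π'_i p_{i,N}) / (∑_{k<N} p_{N,k})`, to a solution of the full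
stationary equations of `P`. -/
theorem gthStep_back_substitution {n : ℕ} (hn : 1 ≤ n)
    (P : Matrix (Fin (n + 1)) (Fin (n + 1)) ℝ) (hP : RowStochastic P)
    (hS : 0 < ∑ k : Fin n, P (Fin.last n) k.castSucc)
    (π' : Fin n → ℝ) (hnn : ∀ i, 0 ≤ π' i)
    (hstat : ∀ j : Fin n, π' j = ∑ i : Fin n, π' i * gthStep P i j)
    (πfull : Fin (n + 1) → ℝ)
    (hfull : πfull = Fin.snoc π'
      ((∑ i : Fin n, π' i * P i.castSucc (Fin.last n)) /
        ∑ k : Fin n, P (Fin.last n) k.castSucc)) :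
    ∀ j : Fin (n + 1), πfull j = ∑ i : Fin (n + 1), πfull i * P i j :=
  gthStep_back_substitution_general P hP hS π' hstat πfull hfull
end
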